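/- Let μ ∈ M(𝕋^d) and let Λ ⊂ ℤ^d be a finite subset. If φ ∈ U satisfies ⟨φ,μ⟩ = ε(μ,Λ), then for every minimal extrapolation ν ∈ 𝓔(μ,Λ): φ = sign(ν) ν-almost everywhere, and supp(ν) ⊂ {x ∈ 𝕋^d : |φ(x)| = 1}. -/

import Mathlib

/- Setting: `M(𝕋^d)`, the space of complex bounded Radon measures on the `d`-dimensional
torus, is identified with the continuous dual of `C(𝕋^d, ℂ)` via the Riesz representation
theorem; the total variation norm corresponds to the operator norm. -/

open MeasureTheory Complex Real

noncomputable section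

attribute [local instance] ZeroLEOneClass.factZeroLtOne

/-- The `d`-dimensional torus `𝕋^d = (ℝ/ℤ)^d`. -/
abbrev Torus (d : ℕ) : Type := Fin d → AddCircle (1 : ℝ)

/-- The character `x ↦ e^{2πi m·x}` on the torus, for `m ∈ ℤ^d`. -/
def torusChar {d : ℕ} (m : Fin d → ℤ) : C(Torus d, ℂ) :=
  ⟨fun x => ∏ i, fourier (m i) (x i), by
    refine continuous_finsetProd _ fun i _ => ?_
    exact (map_continuous (fourier (m i))).comp (continuous_apply i)⟩

/-- The space `M(𝕋^d)` of complex bounded Radon measures on the torus, identified (via the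
Riesz representation theorem) with the continuous dual of `C(𝕋^d, ℂ)`; the total variation
norm is the operator norm. -/
abbrev TorusMeasure (d : ℕ) : Type := C(Torus d, ℂ) →L[ℂ] ℂ

/-- The Fourier coefficient `μ̂(m) = ∫_{𝕋^d} e^{-2πi m·x} dμ(x)`. -/
def mFourierCoeff {d : ℕ} (μ : TorusMeasure d) (m : Fin d → ℤ) : ℂ :=
  μ (torusChar (-m))

/-- `ν` is an extrapolation of `μ` from `Λ` if `ν̂ = μ̂` on `Λ`. -/
def IsExtrapolation {d : ℕ} (μ : TorusMeasure d) (Λ : Finset (Fin d → ℤ))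
    (ν : TorusMeasure d) : Prop :=
  ∀ m ∈ Λ, mFourierCoeff ν m = mFourierCoeff μ m

/-- `ε(μ,Λ) = inf {‖σ‖ : σ ∈ M(𝕋^d), σ̂ = μ̂ on Λ}`. -/
def minExtNorm {d : ℕ} (μ : TorusMeasure d) (Λ : Finset (Fin d → ℤ)) : ℝ :=
  sInf ((fun ν => ‖ν‖) '' {ν | IsExtrapolation μ Λ ν})

/-- `ν` is a minimal extrapolation of `μ` from `Λ`, i.e. `ν ∈ 𝓔(μ,Λ)`:
an extrapolation whose total variation norm equals `ε(μ,Λ)`. -/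
def IsMinimalExtrapolation {d : ℕ} (μ : TorusMeasure d) (Λ : Finset (Fin d → ℤ))
    (ν : TorusMeasure d) : Prop :=
  IsExtrapolation μ Λ ν ∧ ‖ν‖ = minExtNorm μ Λ

/-- `Γ(μ,Λ) = {m ∈ Λ : |μ̂(m)| = ε(μ,Λ)}`. -/
def gammaSet {d : ℕ} (μ : TorusMeasure d) (Λ : Finset (Fin d → ℤ)) : Set (Fin d → ℤ) :=
  {m | m ∈ Λ ∧ ‖mFourierCoeff μ m‖ = minExtNorm μ Λ}

/-- The measure `ν` is supported in the set `S`: it annihilates every continuous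
function vanishing on `S` (for closed `S` this says `supp(ν) ⊆ S`). -/
def SupportedIn {d : ℕ} (ν : TorusMeasure d) (S : Set (Torus d)) : Prop :=
  ∀ f : C(Torus d, ℂ), (∀ x ∈ S, f x = 0) → ν f = 0

/-- The pairing `⟨f,μ⟩ = ∫_{𝕋^d} f(x) conj(dμ(x)) = conj (μ (conj f))`. -/
def mPairing {d : ℕ} (f : C(Torus d, ℂ)) (μ : TorusMeasure d) : ℂ :=
  starRingEnd ℂ (μ (star f))

/-- `C(𝕋^d;Λ)`: the subspace of trigonometric polynomials
`f(x) = ∑_{m ∈ Λ} a_m e^{2πi m·x}` with frequencies in `Λ`. -/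
def trigPoly {d : ℕ} (Λ : Finset (Fin d → ℤ)) : Submodule ℂ C(Torus d, ℂ) :=
  Submodule.span ℂ (torusChar '' (Λ : Set (Fin d → ℤ)))

/-- For a continuous `g` with `‖g‖_∞ ≤ 1`, the assertion that `sign(ν) = g`
`ν`-almost everywhere, expressed through the standard equivalent condition
`⟨g,ν⟩ = ‖ν‖` (obtained by integrating the Radon–Nikodym identity
`∫ f d|ν| = ∫ f conj(sign ν) dν` against `f = conj g` and using `|ν|(𝕋^d) = ‖ν‖`). -/
def SignEqAE {d : ℕ} (ν : TorusMeasure d) (g : C(Torus d, ℂ)) : Prop :=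
  mPairing g ν = (‖ν‖ : ℂ)

/-- `ν` is a positive measure: it takes nonnegative real values on nonnegative real-valued
continuous functions. -/
def IsPositiveMeasure {d : ℕ} (ν : TorusMeasure d) : Prop :=
  ∀ f : C(Torus d, ℂ), (∀ x, (f x).im = 0 ∧ 0 ≤ (f x).re) → (ν f).im = 0 ∧ 0 ≤ (ν f).re

/-- The Dirac measure `δ_x`: evaluation at `x`. -/
def diracM {d : ℕ} (x : Torus d) : TorusMeasure d :=
  ContinuousMap.evalCLM ℂ x

/-- The modulation `M_n ν`, defined by `d(M_n ν)(x) = e^{2πi n·x} dν(x)`. -/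
def modulateM {d : ℕ} (n : Fin d → ℤ) (ν : TorusMeasure d) : TorusMeasure d :=
  ν.comp (ContinuousLinearMap.mul ℂ C(Torus d, ℂ) (torusChar n))

/-!
Since `ν` and `μ` have the same Fourier coefficients on `Λ`, `⟨φ,ν⟩ = ⟨φ,μ⟩ = ε(μ,Λ) = ‖ν‖`, so
`ν` attains its norm at `conj φ`. A functional `ν` on `C(X)` attaining its norm at some `g` with
`‖g‖ ≤ 1` kills every `k (1 - |g|)`: adding a small multiple of it, rotated so that its `ν`-value
is positive, keeps `g` in the unit ball but would increase `|ν g|`. The closed ideal generated by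
`1 - |g|` consists of all functions vanishing on `{|g| = 1}`, which gives the support statement.
-/

namespace ContinuousMap

variable {X 𝕜 : Type*} [TopologicalSpace X] [RCLike 𝕜]

def oneSubNorm (g : C(X, 𝕜)) : C(X, 𝕜) :=
  ⟨fun x => ((1 - ‖g x‖ : ℝ) : 𝕜), by fun_prop⟩

theorem oneSubNorm_apply (g : C(X, 𝕜)) (x : X) : oneSubNorm g x = ((1 - ‖g x‖ : ℝ) : 𝕜) :=
  rfl

variable [CompactSpace X]

theorem apply_mul_oneSubNorm_eq_zero (ν : C(X, 𝕜) →L[𝕜] 𝕜) {g : C(X, 𝕜)} (hg : ‖g‖ ≤ 1)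
    (hνg : ν g = ‖ν‖) (k : C(X, 𝕜)) : ν (k * oneSubNorm g) = 0 := by
  set z := ν (k * oneSubNorm g)
  obtain ⟨c, hc, hcz⟩ := RCLike.exists_norm_eq_mul_self z
  set t : ℝ := (‖k‖ + 1)⁻¹
  have ht : 0 < t := by positivity
  have htk : t * ‖k‖ ≤ 1 := by
    rw [inv_mul_le_iff₀ (by positivity)]
    linarith
  have hball : ‖g + ((t : 𝕜) * c) • (k * oneSubNorm g)‖ ≤ 1 := by
    refine (ContinuousMap.norm_le _ zero_le_one).2 fun x => ?_
    have hgx : ‖g x‖ ≤ 1 := (g.norm_coe_le_norm x).trans hg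
    have hkx : t * ‖k x‖ ≤ 1 := (mul_le_mul_of_nonneg_left (k.norm_coe_le_norm x) ht.le).trans htk
    calc ‖g x + ((t : 𝕜) * c) • (k x * oneSubNorm g x)‖
        ≤ ‖g x‖ + t * ‖k x‖ * (1 - ‖g x‖) := by
          refine (norm_add_le _ _).trans_eq ?_
          rw [oneSubNorm_apply, norm_smul, norm_mul, norm_mul, hc, RCLike.norm_ofReal,
            RCLike.norm_ofReal, abs_of_pos ht, abs_of_nonneg (by linarith)]
          ring
      _ ≤ ‖g x‖ + 1 * (1 - ‖g x‖) := by gcongr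
      _ = 1 := by ring
  have hperturb : ν (g + ((t : 𝕜) * c) • (k * oneSubNorm g)) = ((‖ν‖ + t * ‖z‖ : ℝ) : 𝕜) := by
    rw [map_add, map_smul, hνg, smul_eq_mul, mul_assoc, ← hcz]
    push_cast
    ring
  have : ‖ν‖ + t * ‖z‖ ≤ ‖ν‖ :=
    calc ‖ν‖ + t * ‖z‖ = ‖ν (g + ((t : 𝕜) * c) • (k * oneSubNorm g))‖ := by
          rw [hperturb, RCLike.norm_ofReal, abs_of_nonneg (by positivity)]
      _ ≤ ‖ν‖ * 1 := ν.le_opNorm_of_le hball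
      _ = ‖ν‖ := mul_one _
  exact norm_le_zero_iff.1 (by nlinarith)

variable [T2Space X]

theorem mem_closure_span_oneSubNorm {g f : C(X, 𝕜)} (hf : ∀ x, ‖g x‖ = 1 → f x = 0) :
    f ∈ (Ideal.span {oneSubNorm g}).closure := by
  rw [← idealOfSet_ofIdeal_eq_closure, mem_idealOfSet]
  intro x hx
  have h0 : oneSubNorm g x = 0 := notMem_setOfIdeal.1 hx (Ideal.mem_span_singleton_self _)
  rw [oneSubNorm_apply, RCLike.ofReal_eq_zero, sub_eq_zero] at h0
  exact hf x h0.symm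

theorem apply_eq_zero_of_apply_eq_opNorm (ν : C(X, 𝕜) →L[𝕜] 𝕜) {g f : C(X, 𝕜)} (hg : ‖g‖ ≤ 1)
    (hνg : ν g = ‖ν‖) (hf : ∀ x, ‖g x‖ = 1 → f x = 0) : ν f = 0 := by
  have hI : (Ideal.span {oneSubNorm g} : Set C(X, 𝕜)) ⊆ ν ⁻¹' {0} := by
    rintro _ hh
    obtain ⟨k, rfl⟩ := Ideal.mem_span_singleton'.1 hh
    exact apply_mul_oneSubNorm_eq_zero ν hg hνg k
  exact closure_minimal hI (isClosed_singleton.preimage ν.continuous)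
    (mem_closure_span_oneSubNorm hf)

end ContinuousMap

theorem star_torusChar {d : ℕ} (m : Fin d → ℤ) : star (torusChar m) = torusChar (-m) := by
  ext x
  simp only [ContinuousMap.star_apply, torusChar, ContinuousMap.coe_mk, star_prod, Pi.neg_apply,
    fourier_neg]
  rfl

theorem IsExtrapolation.apply_star_eq {d : ℕ} {μ ν : TorusMeasure d} {Λ : Finset (Fin d → ℤ)}
    (h : IsExtrapolation μ Λ ν) {φ : C(Torus d, ℂ)} (hφ : φ ∈ trigPoly Λ) :
    ν (star φ) = μ (star φ) := by
  induction hφ using Submodule.span_induction with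
  | mem f hf =>
    obtain ⟨m, hm, rfl⟩ := hf
    rw [star_torusChar]
    exact h m hm
  | zero => simp only [star_zero, map_zero]
  | add f g _ _ hf hg => simp only [star_add, map_add, hf, hg]
  | smul c f _ hf => simp only [star_smul, map_smul, hf]

/-- **Proposition 2.1(g).** If `φ ∈ U` and `⟨φ,μ⟩ = ε(μ,Λ)`, then for every minimal
extrapolation `ν`: `φ = sign(ν)` `ν`-a.e., and `supp(ν) ⊆ {x : |φ(x)| = 1}`. -/
theorem pairing_eq_minExtNorm_sign_and_support {d : ℕ} (μ : TorusMeasure d)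
    (Λ : Finset (Fin d → ℤ)) (φ : C(Torus d, ℂ)) (hφΛ : φ ∈ trigPoly Λ)
    (hφ1 : ‖φ‖ ≤ 1) (hφμ : mPairing φ μ = (minExtNorm μ Λ : ℂ)) :
    ∀ ν : TorusMeasure d, IsMinimalExtrapolation μ Λ ν →
      SignEqAE ν φ ∧ SupportedIn ν {x : Torus d | ‖φ x‖ = 1} := by
  rintro ν ⟨hext, hnorm⟩
  have hsign : SignEqAE ν φ := by
    rw [SignEqAE, mPairing, hext.apply_star_eq hφΛ, ← mPairing, hφμ, hnorm]
  refine ⟨hsign, fun f hf => ?_⟩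
  have hνφ : ν (star φ) = ‖ν‖ := by
    simpa [mPairing] using congrArg (starRingEnd ℂ) hsign
  exact ContinuousMap.apply_eq_zero_of_apply_eq_opNorm ν ((norm_star φ).trans_le hφ1) hνφ
    fun x hx => hf x (by simpa using hx)

end
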